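/- Let w ∈ ℝⁿ and let β₁, …, βᵢ ∈ ℝⁿ be linearly independent. Let ε = w − P w, where P is the orthogonal projection of ℝⁿ onto span{β₁, …, βᵢ}. If ε ≠ 0, then the extended family β₁, …, βᵢ, sign(ε) is linearly independent. -/

import Mathlib

/-! The residual `ε` is orthogonal to `span β`, whereas `⟪ε, sign ε⟫ = ‖ε‖₁ > 0`; hence
`sign ε ∉ span β`. -/

open scoped RealInnerProductSpace

noncomputable def signVec {n : ℕ} (ε : EuclideanSpace ℝ (Fin n)) : EuclideanSpace ℝ (Fin n) :=
  WithLp.toLp 2 fun j => if 0 ≤ ε j then 1 else -1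

theorem LinearIndependent.finSnoc_of_inner_ne_zero {𝕜 E : Type*} [RCLike 𝕜]
    [NormedAddCommGroup E] [InnerProductSpace 𝕜 E] {i : ℕ} {β : Fin i → E}
    (hβ : LinearIndependent 𝕜 β) {ε v : E} (hε : ε ∈ (Submodule.span 𝕜 (Set.range β))ᗮ)
    (hv : inner 𝕜 ε v ≠ 0) :
    LinearIndependent 𝕜 (Fin.snoc β v : Fin (i + 1) → E) :=
  linearIndependent_finSnoc.mpr
    ⟨hβ, fun hmem => hv ((Submodule.mem_orthogonal' _ _).mp hε v hmem)⟩

namespace EuclideanSpace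

variable {n : ℕ}

theorem inner_signVec (ε : EuclideanSpace ℝ (Fin n)) : ⟪ε, signVec ε⟫ = ∑ j, |ε j| := by
  rw [PiLp.inner_apply]
  refine Finset.sum_congr rfl fun j _ => ?_
  simp only [signVec, PiLp.toLp_apply, RCLike.inner_apply, conj_trivial]
  split_ifs with h
  · rw [one_mul, abs_of_nonneg h]
  · rw [neg_one_mul, abs_of_neg (not_le.mp h)]

theorem inner_signVec_pos {ε : EuclideanSpace ℝ (Fin n)} (hε : ε ≠ 0) :
    0 < ⟪ε, signVec ε⟫ := by
  obtain ⟨j, hj⟩ : ∃ j, ε j ≠ 0 := by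
    by_contra! h
    exact hε (PiLp.ext h)
  rw [inner_signVec]
  exact Finset.sum_pos' (fun k _ => abs_nonneg (ε k)) ⟨j, Finset.mem_univ j, abs_pos.mpr hj⟩

end EuclideanSpace

/-- Inductive step of ALQ's sketching: if `β₁, …, βᵢ` are linearly independent and the residual
`ε = w − P w` of the orthogonal projection `P` onto their span is nonzero, then the extended
family `β₁, …, βᵢ, sign(ε)` is linearly independent. -/
theorem alq_sketching_step {n i : ℕ} (w : EuclideanSpace ℝ (Fin n))
    (β : Fin i → EuclideanSpace ℝ (Fin n)) (hβ : LinearIndependent ℝ β)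
    (ε : EuclideanSpace ℝ (Fin n))
    (hε : ε = w - (Submodule.orthogonalProjectionOnto (Submodule.span ℝ (Set.range β)) w :
      EuclideanSpace ℝ (Fin n)))
    (hne : ε ≠ 0) :
    LinearIndependent ℝ (Fin.snoc β (signVec ε) : Fin (i + 1) → EuclideanSpace ℝ (Fin n)) := by
  have hε_orth : ε ∈ (Submodule.span ℝ (Set.range β))ᗮ :=
    hε ▸ Submodule.sub_starProjection_mem_orthogonal w
  exact hβ.finSnoc_of_inner_ne_zero hε_orth (EuclideanSpace.inner_signVec_pos hne).ne'
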